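/- Comparison of radial Clifford and quadratic gaps: |σ_min(L_{(λ,ν)}(A,B)) − μ^{Q}_{(λ,ν)}(A,B)| ≤ √(Σ_{i<j}‖[A_i,A_j]‖ + ‖F‖), where μ^{Q} is the square root of the smallest eigenvalue of the quadratic composite operator Q_{(λ,ν)}(A,B) and F is the cross-term in the expansion of L†L. -/

import Mathlib

open Matrix Kronecker

/-- Operator (spectral) norm of a complex matrix. -/
noncomputable def opNorm {m n : Type*} [Fintype m] [Fintype n] [DecidableEq n]
    (A : Matrix m n ℂ) : ℝ :=
  ‖LinearMap.toContinuousLinearMap (Matrix.toEuclideanLin A)‖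

/-- Smallest singular value of a complex matrix. -/
noncomputable def sigMin {m n : Type*} [Fintype m] [Fintype n] [DecidableEq n]
    (A : Matrix m n ℂ) : ℝ :=
  sInf {r : ℝ | ∃ ψ : EuclideanSpace ℂ n, ‖ψ‖ = 1 ∧ r = ‖Matrix.toEuclideanLin A ψ‖}

/-- The non-Hermitian spectral localizer. -/
noncomputable def localizer {n d m : ℕ}
    (A : Fin d → Matrix (Fin n) (Fin n) ℂ)
    (Γ : Fin d → Matrix (Fin m ⊕ Fin m) (Fin m ⊕ Fin m) ℂ)
    (B : Matrix (Fin n) (Fin n) ℂ) (lam : Fin d → ℝ) (ν : ℂ) :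
    Matrix (Fin n × (Fin m ⊕ Fin m)) (Fin n × (Fin m ⊕ Fin m)) ℂ :=
  (∑ i, (A i - (lam i : ℂ) • 1) ⊗ₖ Γ i)
    + (B - ν • 1) ⊗ₖ (Matrix.fromBlocks 1 0 0 0)
    + (B - ν • 1)ᴴ ⊗ₖ (Matrix.fromBlocks 0 0 0 (-1))

/-- The cross-term matrix `F` in the expansion of `L†L`. -/
noncomputable def crossF {n d m : ℕ}
    (A : Fin d → Matrix (Fin n) (Fin n) ℂ)
    (Γ : Fin d → Matrix (Fin m ⊕ Fin m) (Fin m ⊕ Fin m) ℂ)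
    (B : Matrix (Fin n) (Fin n) ℂ) (lam : Fin d → ℝ) (ν : ℂ) :
    Matrix (Fin n × (Fin m ⊕ Fin m)) (Fin n × (Fin m ⊕ Fin m)) ℂ :=
  (∑ i, ((A i - (lam i : ℂ) • 1) * (B - ν • 1)) ⊗ₖ (Γ i * Matrix.fromBlocks 1 0 0 0))
    + (∑ i, ((A i - (lam i : ℂ) • 1) * (B - ν • 1)) ⊗ₖ (Γ i * Matrix.fromBlocks 1 0 0 0))ᴴ
    + (∑ i, ((A i - (lam i : ℂ) • 1) * (B - ν • 1)ᴴ) ⊗ₖ (Γ i * Matrix.fromBlocks 0 0 0 (-1)))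
    + (∑ i, ((A i - (lam i : ℂ) • 1) * (B - ν • 1)ᴴ) ⊗ₖ (Γ i * Matrix.fromBlocks 0 0 0 (-1)))ᴴ

/-- The quadratic composite operator
`Q = Σ_i (A_i−λ_i)²⊗I₂ + (B−ν)†(B−ν)⊗diag(1,0) + (B−ν)(B−ν)†⊗diag(0,1)`. -/
noncomputable def quadQ {n d : ℕ}
    (A : Fin d → Matrix (Fin n) (Fin n) ℂ)
    (B : Matrix (Fin n) (Fin n) ℂ) (lam : Fin d → ℝ) (ν : ℂ) :
    Matrix (Fin n × (Fin 1 ⊕ Fin 1)) (Fin n × (Fin 1 ⊕ Fin 1)) ℂ :=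
  (∑ i, (A i - (lam i : ℂ) • 1) ^ 2) ⊗ₖ (1 : Matrix (Fin 1 ⊕ Fin 1) (Fin 1 ⊕ Fin 1) ℂ)
    + ((B - ν • 1)ᴴ * (B - ν • 1)) ⊗ₖ (Matrix.fromBlocks 1 0 0 0)
    + ((B - ν • 1) * (B - ν • 1)ᴴ) ⊗ₖ (Matrix.fromBlocks 0 0 0 1)

section Helpers

lemma kron_conjT {l p : Type*} (A : Matrix l l ℂ) (B : Matrix p p ℂ) : (A ⊗ₖ B)ᴴ = Aᴴ ⊗ₖ Bᴴ := by
  ext ⟨i,j⟩ ⟨k,s⟩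
  simp [conjTranspose_apply, kronecker_apply, mul_comm]

lemma kron_neg {l p : Type*} (A : Matrix l l ℂ) (B : Matrix p p ℂ) : A ⊗ₖ (-B) = -(A ⊗ₖ B) := by
  ext ⟨i,j⟩ ⟨k,s⟩; simp [kronecker_apply]

lemma sub_kron {l p : Type*} (A A' : Matrix l l ℂ) (B : Matrix p p ℂ) :
    (A - A') ⊗ₖ B = A ⊗ₖ B - A' ⊗ₖ B := by
  ext ⟨i,j⟩ ⟨k,s⟩; simp [kronecker_apply, sub_mul]

lemma sum_kron {l p ι : Type*} (s : Finset ι) (A : ι → Matrix l l ℂ) (B : Matrix p p ℂ) :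
    (∑ i ∈ s, A i) ⊗ₖ B = ∑ i ∈ s, (A i ⊗ₖ B) := by
  ext ⟨i,j⟩ ⟨k,t⟩; simp [kronecker_apply, Matrix.sum_apply, Finset.sum_mul]

variable {N : Type*} [Fintype N] [DecidableEq N]

noncomputable def qf (M : Matrix N N ℂ) (ψ : EuclideanSpace ℂ N) : ℝ :=
  (inner ℂ ψ (Matrix.toEuclideanLin M ψ) : ℂ).re

lemma qf_add (M M' : Matrix N N ℂ) (ψ : EuclideanSpace ℂ N) :
    qf (M + M') ψ = qf M ψ + qf M' ψ := by
  simp [qf, inner_add_right]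

lemma qf_sum {ι : Type*} (s : Finset ι) (M : ι → Matrix N N ℂ) (ψ : EuclideanSpace ℂ N) :
    qf (∑ i ∈ s, M i) ψ = ∑ i ∈ s, qf (M i) ψ := by
  simp [qf, inner_sum, Complex.re_sum]

lemma norm_toEuclideanLin_sq (W : Matrix N N ℂ) (ψ : EuclideanSpace ℂ N) :
    ‖Matrix.toEuclideanLin W ψ‖ ^ 2 = qf (Wᴴ * W) ψ := by
  have h1 : Matrix.toEuclideanLin (Wᴴ * W) ψ
      = Matrix.toEuclideanLin Wᴴ (Matrix.toEuclideanLin W ψ) := by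
    simp [Matrix.toEuclideanLin_apply, Matrix.mulVec_mulVec]
  rw [qf, h1, Matrix.toEuclideanLin_conjTranspose_eq_adjoint,
    LinearMap.adjoint_inner_right]
  have h2 := @inner_self_eq_norm_sq ℂ _ _ _ _ ((Matrix.toEuclideanLin W) ψ)
  simp only [RCLike.re_to_complex] at h2
  rw [← h2]

lemma qf_nonneg_of_sq (W : Matrix N N ℂ) (ψ : EuclideanSpace ℂ N) :
    0 ≤ qf (Wᴴ * W) ψ := by
  rw [← norm_toEuclideanLin_sq]; positivity

lemma norm_toEuclideanLin_le (M : Matrix N N ℂ) (ψ : EuclideanSpace ℂ N) :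
    ‖Matrix.toEuclideanLin M ψ‖ ≤ opNorm M * ‖ψ‖ :=
  (LinearMap.toContinuousLinearMap (Matrix.toEuclideanLin M)).le_opNorm ψ

lemma abs_qf_le (M : Matrix N N ℂ) (ψ : EuclideanSpace ℂ N) (hψ : ‖ψ‖ = 1) :
    |qf M ψ| ≤ opNorm M := by
  have h1 : |qf M ψ| ≤ ‖(inner ℂ ψ (Matrix.toEuclideanLin M ψ) : ℂ)‖ := by
    rw [qf]; exact Complex.abs_re_le_norm _
  refine h1.trans ((norm_inner_le_norm _ _).trans ?_)
  rw [hψ, one_mul]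
  calc ‖(Matrix.toEuclideanLin M) ψ‖
      ≤ opNorm M * ‖ψ‖ := norm_toEuclideanLin_le M ψ
    _ = opNorm M := by rw [hψ, mul_one]

lemma eigen_expansion [Nonempty N] (H : Matrix N N ℂ) (hH : H.IsHermitian)
    (ψ : EuclideanSpace ℂ N) :
    qf H ψ = ∑ i, hH.eigenvalues i * Complex.normSq (inner ℂ (hH.eigenvectorBasis i) ψ : ℂ) := by
  classical
  set b := hH.eigenvectorBasis with hb
  set T := Matrix.toEuclideanLin H with hT
  have hsa : LinearMap.adjoint T = T := by
    rw [hT, ← Matrix.toEuclideanLin_conjTranspose_eq_adjoint, hH.eq]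
  have hTb : ∀ i, T (b i) = (hH.eigenvalues i : ℂ) • b i := by
    intro i
    have h := hH.mulVec_eigenvectorBasis i
    ext x
    have hx := congrFun h x
    simp only [hT, Matrix.toEuclideanLin_apply]
    simpa [Complex.real_smul] using hx
  have key : (inner ℂ ψ (T ψ) : ℂ)
      = ∑ i, (hH.eigenvalues i : ℂ) * Complex.normSq (inner ℂ (b i) ψ : ℂ) := by
    rw [← b.sum_inner_mul_inner ψ (T ψ)]
    congr 1; ext i
    have h1 : (inner ℂ (b i) (T ψ) : ℂ) = inner ℂ (T (b i)) ψ := by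
      conv_lhs => rw [← hsa]
      exact LinearMap.adjoint_inner_right T (b i) ψ
    rw [h1, hTb i, inner_smul_left]
    have h2 : (inner ℂ ψ (b i) : ℂ) = starRingEnd ℂ (inner ℂ (b i) ψ) := (inner_conj_symm _ _).symm
    rw [h2]
    rw [Complex.conj_ofReal]
    rw [show starRingEnd ℂ (inner ℂ (b i) ψ : ℂ) * ((hH.eigenvalues i : ℂ) * inner ℂ (b i) ψ)
      = (hH.eigenvalues i : ℂ) * (starRingEnd ℂ (inner ℂ (b i) ψ : ℂ) * inner ℂ (b i) ψ) by ring]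
    congr 1
    rw [mul_comm, Complex.mul_conj]
  rw [qf, key]
  rw [Complex.re_sum]
  congr 1; ext i
  simp [Complex.ofReal_mul]

lemma parseval_sq [Nonempty N] (H : Matrix N N ℂ) (hH : H.IsHermitian)
    (ψ : EuclideanSpace ℂ N) :
    ∑ i, Complex.normSq (inner ℂ (hH.eigenvectorBasis i) ψ : ℂ) = ‖ψ‖ ^ 2 := by
  classical
  set b := hH.eigenvectorBasis with hb
  have h1 : ‖ψ‖ = ‖b.repr ψ‖ := (b.repr.norm_map ψ).symm
  rw [h1, EuclideanSpace.norm_eq]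
  rw [Real.sq_sqrt (by positivity)]
  congr 1; ext i
  rw [b.repr_apply_apply]
  rw [Complex.normSq_eq_norm_sq]

lemma rayleigh_lower [Nonempty N] (H : Matrix N N ℂ) (hH : H.IsHermitian)
    (ψ : EuclideanSpace ℂ N) :
    (⨅ i, hH.eigenvalues i) * ‖ψ‖ ^ 2 ≤ qf H ψ := by
  classical
  rw [eigen_expansion H hH ψ, ← parseval_sq H hH ψ, Finset.mul_sum]
  refine Finset.sum_le_sum fun i _ => ?_
  have h1 : (⨅ j, hH.eigenvalues j) ≤ hH.eigenvalues i :=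
    ciInf_le (Finite.bddBelow_range _) i
  exact mul_le_mul_of_nonneg_right h1 (Complex.normSq_nonneg _)

lemma rayleigh_attained [Nonempty N] (H : Matrix N N ℂ) (hH : H.IsHermitian) :
    ∃ ψ : EuclideanSpace ℂ N, ‖ψ‖ = 1 ∧ qf H ψ = ⨅ i, hH.eigenvalues i := by
  classical
  obtain ⟨i₀, -, hmin⟩ := Finset.exists_min_image Finset.univ hH.eigenvalues
    ⟨Classical.arbitrary N, Finset.mem_univ _⟩
  have hinf : (⨅ i, hH.eigenvalues i) = hH.eigenvalues i₀ :=
    le_antisymm (ciInf_le (Finite.bddBelow_range _) i₀)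
      (le_ciInf fun i => hmin i (Finset.mem_univ i))
  refine ⟨hH.eigenvectorBasis i₀, hH.eigenvectorBasis.orthonormal.1 i₀, ?_⟩
  rw [eigen_expansion H hH, hinf]
  rw [Finset.sum_eq_single i₀]
  · simp [hH.eigenvectorBasis.orthonormal.1 i₀, inner_self_eq_norm_sq_to_K]
  · intro j _ hj
    rw [hH.eigenvectorBasis.orthonormal.2 hj]
    simp
  · simp

end Helpers

section KronDiag

variable {n' : ℕ} {S : Type*} [Fintype S] [DecidableEq S]

/-- the `t`-th column slice of a vector on a product index. -/
def colv (ψ : EuclideanSpace ℂ (Fin n' × S)) (t : S) : EuclideanSpace ℂ (Fin n') :=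
  WithLp.toLp 2 (fun x => ψ (x, t))

lemma norm_colv_decomp (ψ : EuclideanSpace ℂ (Fin n' × S)) :
    ‖ψ‖ ^ 2 = ∑ t, ‖colv ψ t‖ ^ 2 := by
  rw [EuclideanSpace.norm_eq, Real.sq_sqrt (by positivity)]
  have h : ∀ t, ‖colv ψ t‖ ^ 2 = ∑ x, ‖colv ψ t x‖ ^ 2 := fun t => by
    rw [EuclideanSpace.norm_eq, Real.sq_sqrt (by positivity)]
  simp only [h]
  rw [Fintype.sum_prod_type]
  rw [Finset.sum_comm]
  rfl

lemma toEuclideanLin_kron_diag_apply (M : Matrix (Fin n') (Fin n') ℂ) (f : S → ℂ)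
    (ψ : EuclideanSpace ℂ (Fin n' × S)) (x : Fin n') (t : S) :
    Matrix.toEuclideanLin (M ⊗ₖ Matrix.diagonal f) ψ (x, t)
      = f t * Matrix.toEuclideanLin M (colv ψ t) x := by
  classical
  simp only [Matrix.toEuclideanLin_apply]
  show ((M ⊗ₖ Matrix.diagonal f) *ᵥ ψ) (x, t) = f t * ((M *ᵥ colv ψ t) x)
  simp only [Matrix.mulVec, dotProduct, kronecker_apply, Matrix.diagonal_apply]
  rw [Fintype.sum_prod_type]
  rw [Finset.mul_sum]
  refine Finset.sum_congr rfl fun y _ => ?_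
  rw [Finset.sum_eq_single t]
  · simp [colv]; ring
  · intro u _ hu
    simp [Ne.symm hu]
  · simp

lemma inner_kron_diag (M : Matrix (Fin n') (Fin n') ℂ) (f : S → ℂ)
    (ψ : EuclideanSpace ℂ (Fin n' × S)) :
    (inner ℂ ψ (Matrix.toEuclideanLin (M ⊗ₖ Matrix.diagonal f) ψ) : ℂ)
      = ∑ t, f t * (inner ℂ (colv ψ t) (Matrix.toEuclideanLin M (colv ψ t)) : ℂ) := by
  classical
  rw [PiLp.inner_apply]
  rw [Fintype.sum_prod_type]
  rw [Finset.sum_comm]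
  refine Finset.sum_congr rfl fun t _ => ?_
  rw [PiLp.inner_apply, Finset.mul_sum]
  refine Finset.sum_congr rfl fun x _ => ?_
  rw [toEuclideanLin_kron_diag_apply]
  simp only [RCLike.inner_apply]
  show f t * _ * (starRingEnd ℂ) (ψ (x, t)) = f t * (_ * (starRingEnd ℂ) (colv ψ t x))
  rw [show colv ψ t x = ψ (x,t) from rfl]
  ring

end KronDiag

section Embed

variable {n' : ℕ} {S : Type*} [Fintype S] [DecidableEq S]

def embedv (u : S) (v : EuclideanSpace ℂ (Fin n')) : EuclideanSpace ℂ (Fin n' × S) :=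
  WithLp.toLp 2 (fun p => if p.2 = u then v p.1 else 0)

lemma colv_embedv (u w : S) (v : EuclideanSpace ℂ (Fin n')) :
    colv (embedv u v) w = if w = u then v else 0 := by
  by_cases h : w = u
  · subst h; ext x; simp [colv, embedv]
  · ext x; simp [colv, embedv, h]

lemma embedv_zero (u : S) : embedv u (0 : EuclideanSpace ℂ (Fin n')) = 0 := by
  ext p; simp [embedv]

lemma qf_zero (M : Matrix (Fin n' × S) (Fin n' × S) ℂ) : qf M (0 : EuclideanSpace ℂ (Fin n' × S)) = 0 := by
  simp [qf]

lemma norm_embedv_sq (u : S) (v : EuclideanSpace ℂ (Fin n')) :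
    ‖embedv u v‖ ^ 2 = ‖v‖ ^ 2 := by
  rw [norm_colv_decomp]
  rw [Finset.sum_eq_single u]
  · rw [colv_embedv]; simp
  · intro w _ hw; rw [colv_embedv]; simp [hw]
  · simp

lemma inner_kron_diag_embed (M : Matrix (Fin n') (Fin n') ℂ) (f : S → ℂ)
    (u : S) (v : EuclideanSpace ℂ (Fin n')) :
    (inner ℂ (embedv u v) (Matrix.toEuclideanLin (M ⊗ₖ Matrix.diagonal f) (embedv u v)) : ℂ)
      = f u * (inner ℂ v (Matrix.toEuclideanLin M v) : ℂ) := by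
  rw [inner_kron_diag]
  rw [Finset.sum_eq_single u]
  · rw [colv_embedv]; simp
  · intro w _ hw; rw [colv_embedv]; simp [hw]
  · simp

end Embed

section Trip

abbrev S1 := (Fin 1 ⊕ Fin 1)

def pi1 {m : ℕ} : (Fin m ⊕ Fin m) → S1 := Sum.map (fun _ => 0) (fun _ => 0)

def dc0 : S1 → ℂ := fun _ => 1
def dc1 : S1 → ℂ := Sum.elim (fun _ => 1) (fun _ => 0)
def dc2 : S1 → ℂ := Sum.elim (fun _ => 0) (fun _ => 1)

variable {n' : ℕ}

noncomputable def tripQ (M₀ M₁ M₂ : Matrix (Fin n') (Fin n') ℂ) {S : Type*}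
    [Fintype S] [DecidableEq S] (π : S → S1) : Matrix (Fin n' × S) (Fin n' × S) ℂ :=
  M₀ ⊗ₖ Matrix.diagonal (fun t => dc0 (π t)) + M₁ ⊗ₖ Matrix.diagonal (fun t => dc1 (π t))
    + M₂ ⊗ₖ Matrix.diagonal (fun t => dc2 (π t))

lemma qf_trip (M₀ M₁ M₂ : Matrix (Fin n') (Fin n') ℂ) {S : Type*}
    [Fintype S] [DecidableEq S] (π : S → S1) (hπ : ∀ s, pi1 (π s) = π s)
    (ψ : EuclideanSpace ℂ (Fin n' × S)) :
    qf (tripQ M₀ M₁ M₂ π) ψ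
      = ∑ t, qf (tripQ M₀ M₁ M₂ (pi1 (m := 1))) (embedv (π t) (colv ψ t)) := by
  have hterm : ∀ (t : S), qf (tripQ M₀ M₁ M₂ (pi1 (m := 1))) (embedv (π t) (colv ψ t))
      = (dc0 (π t) * (inner ℂ (colv ψ t) (Matrix.toEuclideanLin M₀ (colv ψ t)) : ℂ)).re
        + (dc1 (π t) * (inner ℂ (colv ψ t) (Matrix.toEuclideanLin M₁ (colv ψ t)) : ℂ)).re
        + (dc2 (π t) * (inner ℂ (colv ψ t) (Matrix.toEuclideanLin M₂ (colv ψ t)) : ℂ)).re := by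
    intro t
    rw [tripQ, qf_add, qf_add]
    rw [qf, qf, qf, inner_kron_diag_embed, inner_kron_diag_embed, inner_kron_diag_embed]
    rw [hπ t]
  simp only [hterm]
  rw [tripQ, qf_add, qf_add]
  rw [qf, qf, qf, inner_kron_diag, inner_kron_diag, inner_kron_diag]
  rw [Complex.re_sum, Complex.re_sum, Complex.re_sum]
  rw [← Finset.sum_add_distrib, ← Finset.sum_add_distrib]

end Trip

section Identity

lemma sum_pairs {M : Type*} [AddCommMonoid M] {d : ℕ} (f : Fin d → Fin d → M) :
    ∑ i, ∑ j, f i j = (∑ i, f i i)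
      + ∑ p ∈ Finset.univ.filter (fun p : Fin d × Fin d => p.1 < p.2), (f p.1 p.2 + f p.2 p.1) := by
  classical
  have hsplit : (Finset.univ : Finset (Fin d × Fin d)) =
      (Finset.univ.filter (fun p : Fin d × Fin d => p.1 = p.2)) ∪
      ((Finset.univ.filter (fun p : Fin d × Fin d => p.1 < p.2)) ∪
       (Finset.univ.filter (fun p : Fin d × Fin d => p.2 < p.1))) := by
    ext ⟨i,j⟩
    simp only [Finset.mem_univ, Finset.mem_union, Finset.mem_filter, true_and, true_iff]
    rcases lt_trichotomy i j with h|h|h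
    · exact Or.inr (Or.inl h)
    · exact Or.inl h
    · exact Or.inr (Or.inr h)
  have hd1 : Disjoint (Finset.univ.filter (fun p : Fin d × Fin d => p.1 < p.2))
      (Finset.univ.filter (fun p : Fin d × Fin d => p.2 < p.1)) := by
    simp only [Finset.disjoint_left, Finset.mem_filter, Finset.mem_univ, true_and]
    rintro ⟨i,j⟩ h1 h2; exact absurd (h1.trans h2) (lt_irrefl _)
  have hd2 : Disjoint (Finset.univ.filter (fun p : Fin d × Fin d => p.1 = p.2))
      ((Finset.univ.filter (fun p : Fin d × Fin d => p.1 < p.2)) ∪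
       (Finset.univ.filter (fun p : Fin d × Fin d => p.2 < p.1))) := by
    simp only [Finset.disjoint_left, Finset.mem_filter, Finset.mem_univ, true_and,
      Finset.mem_union]
    rintro ⟨i,j⟩ h1 h2
    rcases h2 with h|h
    · rw [h1] at h; exact absurd h (lt_irrefl _)
    · rw [h1] at h; exact absurd h (lt_irrefl _)
  rw [← Finset.sum_product', Finset.univ_product_univ]
  have : ∑ q ∈ (Finset.univ : Finset (Fin d × Fin d)) , f q.1 q.2
      = (∑ q ∈ Finset.univ.filter (fun p : Fin d × Fin d => p.1 = p.2), f q.1 q.2)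
        + ((∑ q ∈ Finset.univ.filter (fun p : Fin d × Fin d => p.1 < p.2), f q.1 q.2)
          + ∑ q ∈ Finset.univ.filter (fun p : Fin d × Fin d => p.2 < p.1), f q.1 q.2) := by
    conv_lhs => rw [hsplit]
    rw [Finset.sum_union hd2, Finset.sum_union hd1]
  rw [this]
  congr 1
  · refine Finset.sum_nbij' (fun q => q.1) (fun i => (i,i)) ?_ ?_ ?_ ?_ ?_ <;>
      simp +contextual [Prod.ext_iff, eq_comm]
  · rw [Finset.sum_add_distrib]
    congr 1
    exact Finset.sum_nbij' (fun p => (p.2, p.1)) (fun p => (p.2, p.1))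
      (by simp) (by simp) (by simp) (by simp) (by simp)

variable {n d m : ℕ}

noncomputable def bigK (A : Fin d → Matrix (Fin n) (Fin n) ℂ)
    (B : Matrix (Fin n) (Fin n) ℂ) (lam : Fin d → ℝ) (ν : ℂ) (m : ℕ) :
    Matrix (Fin n × (Fin m ⊕ Fin m)) (Fin n × (Fin m ⊕ Fin m)) ℂ :=
  tripQ (∑ i, (A i - (lam i : ℂ) • 1) ^ 2) ((B - ν•1)ᴴ * (B - ν•1)) ((B - ν•1) * (B - ν•1)ᴴ)
    (pi1 (m := m))

lemma diag_dc0 : Matrix.diagonal (fun t => dc0 (pi1 (m := m) t))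
    = (1 : Matrix (Fin m ⊕ Fin m) (Fin m ⊕ Fin m) ℂ) := by
  rw [← Matrix.diagonal_one]
  rfl

lemma diag_dc1 : Matrix.diagonal (fun t => dc1 (pi1 (m := m) t))
    = (Matrix.fromBlocks 1 0 0 0 : Matrix (Fin m ⊕ Fin m) (Fin m ⊕ Fin m) ℂ) := by
  rw [show (Matrix.fromBlocks 1 0 0 0 : Matrix (Fin m ⊕ Fin m) (Fin m ⊕ Fin m) ℂ)
      = Matrix.fromBlocks (Matrix.diagonal fun _ => 1) 0 0 (Matrix.diagonal fun _ => 0) by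
    simp [Matrix.diagonal_one, Matrix.diagonal_zero]]
  rw [Matrix.fromBlocks_diagonal]
  congr 1; funext t; cases t <;> rfl

lemma diag_dc2 : Matrix.diagonal (fun t => dc2 (pi1 (m := m) t))
    = (Matrix.fromBlocks 0 0 0 1 : Matrix (Fin m ⊕ Fin m) (Fin m ⊕ Fin m) ℂ) := by
  rw [show (Matrix.fromBlocks 0 0 0 1 : Matrix (Fin m ⊕ Fin m) (Fin m ⊕ Fin m) ℂ)
      = Matrix.fromBlocks (Matrix.diagonal fun _ => 0) 0 0 (Matrix.diagonal fun _ => 1) by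
    simp [Matrix.diagonal_one, Matrix.diagonal_zero]]
  rw [Matrix.fromBlocks_diagonal]
  congr 1; funext t; cases t <;> rfl

lemma bigK_eq (A : Fin d → Matrix (Fin n) (Fin n) ℂ)
    (B : Matrix (Fin n) (Fin n) ℂ) (lam : Fin d → ℝ) (ν : ℂ) :
    bigK A B lam ν m
      = (∑ i, (A i - (lam i : ℂ) • 1) ^ 2) ⊗ₖ (1 : Matrix (Fin m ⊕ Fin m) (Fin m ⊕ Fin m) ℂ)
        + ((B - ν•1)ᴴ * (B - ν•1)) ⊗ₖ Matrix.fromBlocks 1 0 0 0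
        + ((B - ν•1) * (B - ν•1)ᴴ) ⊗ₖ Matrix.fromBlocks 0 0 0 1 := by
  rw [bigK, tripQ, diag_dc0, diag_dc1, diag_dc2]

lemma quadQ_eq_tripQ (A : Fin d → Matrix (Fin n) (Fin n) ℂ)
    (B : Matrix (Fin n) (Fin n) ℂ) (lam : Fin d → ℝ) (ν : ℂ) :
    quadQ A B lam ν
      = tripQ (∑ i, (A i - (lam i : ℂ) • 1) ^ 2) ((B - ν•1)ᴴ * (B - ν•1))
          ((B - ν•1) * (B - ν•1)ᴴ) (pi1 (m := 1)) := by
  rw [quadQ, tripQ, diag_dc0, diag_dc1, diag_dc2]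

lemma localizer_expand (A : Fin d → Matrix (Fin n) (Fin n) ℂ) (hA : ∀ i, (A i).IsHermitian)
    (B : Matrix (Fin n) (Fin n) ℂ)
    (Γ : Fin d → Matrix (Fin m ⊕ Fin m) (Fin m ⊕ Fin m) ℂ)
    (hΓH : ∀ i, (Γ i).IsHermitian)
    (hΓsq : ∀ i, Γ i * Γ i = 1)
    (hΓanti : ∀ i j, i ≠ j → Γ i * Γ j = -(Γ j * Γ i))
    (lam : Fin d → ℝ) (ν : ℂ) :
    (localizer A Γ B lam ν)ᴴ * localizer A Γ B lam ν
      = bigK A B lam ν m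
        + (∑ p ∈ Finset.univ.filter (fun p : Fin d × Fin d => p.1 < p.2),
            (A p.1 * A p.2 - A p.2 * A p.1) ⊗ₖ (Γ p.1 * Γ p.2))
        + crossF A Γ B lam ν := by
  set X : Fin d → Matrix (Fin n) (Fin n) ℂ := fun i => A i - (lam i : ℂ) • 1 with hX
  set Y : Matrix (Fin n) (Fin n) ℂ := B - ν • 1 with hY
  set E₁ : Matrix (Fin m ⊕ Fin m) (Fin m ⊕ Fin m) ℂ := Matrix.fromBlocks 1 0 0 0 with hE1
  set E₂ : Matrix (Fin m ⊕ Fin m) (Fin m ⊕ Fin m) ℂ := Matrix.fromBlocks 0 0 0 (-1) with hE2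
  set Sm : Matrix (Fin n × (Fin m ⊕ Fin m)) (Fin n × (Fin m ⊕ Fin m)) ℂ := ∑ i, X i ⊗ₖ Γ i with hSm
  have hXH : ∀ i, (X i)ᴴ = X i := by
    intro i
    simp [hX, Matrix.conjTranspose_sub, Matrix.conjTranspose_smul, Complex.star_def,
      Complex.conj_ofReal, (hA i).eq]
  have hE1H : E₁ᴴ = E₁ := by
    simp [hE1, Matrix.fromBlocks_conjTranspose]
  have hE2H : E₂ᴴ = E₂ := by
    simp [hE2, Matrix.fromBlocks_conjTranspose]
  have hE11 : E₁ * E₁ = E₁ := by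
    simp [hE1, Matrix.fromBlocks_multiply]
  have hE12 : E₁ * E₂ = 0 := by
    rw [hE1, hE2, Matrix.fromBlocks_multiply]
    simp [← Matrix.fromBlocks_zero]
  have hE21 : E₂ * E₁ = 0 := by
    rw [hE1, hE2, Matrix.fromBlocks_multiply]
    simp [← Matrix.fromBlocks_zero]
  have hE22 : E₂ * E₂ = Matrix.fromBlocks 0 0 0 1 := by
    rw [hE2, Matrix.fromBlocks_multiply]
    simp
  have hSmH : Smᴴ = Sm := by
    rw [hSm, Matrix.conjTranspose_sum]
    refine Finset.sum_congr rfl fun i _ => ?_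
    rw [kron_conjT, hXH, (hΓH i).eq]
  have hLoc : localizer A Γ B lam ν = Sm + Y ⊗ₖ E₁ + Yᴴ ⊗ₖ E₂ := rfl
  have hLH : (localizer A Γ B lam ν)ᴴ = Sm + Yᴴ ⊗ₖ E₁ + Y ⊗ₖ E₂ := by
    rw [hLoc, Matrix.conjTranspose_add, Matrix.conjTranspose_add, hSmH, kron_conjT, kron_conjT,
      hE1H, hE2H, Matrix.conjTranspose_conjTranspose]
  -- expansion of the product
  have expand : (localizer A Γ B lam ν)ᴴ * localizer A Γ B lam ν
      = Sm * Sm + (Sm * (Y ⊗ₖ E₁) + (Yᴴ ⊗ₖ E₁) * Sm) + (Sm * (Yᴴ ⊗ₖ E₂) + (Y ⊗ₖ E₂) * Sm)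
        + ((Yᴴ ⊗ₖ E₁) * (Y ⊗ₖ E₁) + (Y ⊗ₖ E₂) * (Yᴴ ⊗ₖ E₂))
        + ((Yᴴ ⊗ₖ E₁) * (Yᴴ ⊗ₖ E₂) + (Y ⊗ₖ E₂) * (Y ⊗ₖ E₁)) := by
    rw [hLH, hLoc]
    noncomm_ring
  rw [expand]
  -- individual terms
  have hSS : Sm * Sm
      = (∑ i, X i ^ 2) ⊗ₖ (1 : Matrix (Fin m ⊕ Fin m) (Fin m ⊕ Fin m) ℂ)
        + ∑ p ∈ Finset.univ.filter (fun p : Fin d × Fin d => p.1 < p.2),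
            (A p.1 * A p.2 - A p.2 * A p.1) ⊗ₖ (Γ p.1 * Γ p.2) := by
    rw [hSm, Finset.sum_mul_sum]
    have h1 : ∀ i j, (X i ⊗ₖ Γ i) * (X j ⊗ₖ Γ j) = (X i * X j) ⊗ₖ (Γ i * Γ j) := by
      intro i j; rw [← Matrix.mul_kronecker_mul]
    simp only [h1]
    rw [sum_pairs (fun i j => (X i * X j) ⊗ₖ (Γ i * Γ j))]
    congr 1
    · rw [sum_kron]
      refine Finset.sum_congr rfl fun i _ => ?_
      rw [hΓsq i, sq]
    · refine Finset.sum_congr rfl fun p hp => ?_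
      have hne : p.2 ≠ p.1 := by
        simp only [Finset.mem_filter] at hp
        exact ne_of_gt hp.2
      rw [hΓanti p.2 p.1 hne, kron_neg]
      rw [← sub_eq_add_neg, ← sub_kron]
      have harg : X p.1 * X p.2 - X p.2 * X p.1 = A p.1 * A p.2 - A p.2 * A p.1 := by
        simp only [hX, sub_mul, mul_sub, mul_smul_comm, smul_mul_assoc, mul_one, one_mul]
        module
      rw [harg]
  have hS1 : Sm * (Y ⊗ₖ E₁) = ∑ i, (X i * Y) ⊗ₖ (Γ i * E₁) := by
    rw [hSm, Finset.sum_mul]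
    exact Finset.sum_congr rfl fun i _ => (Matrix.mul_kronecker_mul _ _ _ _).symm
  have hS2 : Sm * (Yᴴ ⊗ₖ E₂) = ∑ i, (X i * Yᴴ) ⊗ₖ (Γ i * E₂) := by
    rw [hSm, Finset.sum_mul]
    exact Finset.sum_congr rfl fun i _ => (Matrix.mul_kronecker_mul _ _ _ _).symm
  have h1S : (Yᴴ ⊗ₖ E₁) * Sm = (∑ i, (X i * Y) ⊗ₖ (Γ i * E₁))ᴴ := by
    rw [Matrix.conjTranspose_sum]
    rw [hSm, Finset.mul_sum]
    refine Finset.sum_congr rfl fun i _ => ?_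
    rw [kron_conjT, Matrix.conjTranspose_mul, Matrix.conjTranspose_mul, hXH, (hΓH i).eq, hE1H,
      ← Matrix.mul_kronecker_mul]
  have h2S : (Y ⊗ₖ E₂) * Sm = (∑ i, (X i * Yᴴ) ⊗ₖ (Γ i * E₂))ᴴ := by
    rw [Matrix.conjTranspose_sum]
    rw [hSm, Finset.mul_sum]
    refine Finset.sum_congr rfl fun i _ => ?_
    rw [kron_conjT, Matrix.conjTranspose_mul, Matrix.conjTranspose_mul, hXH, (hΓH i).eq, hE2H,
      Matrix.conjTranspose_conjTranspose, ← Matrix.mul_kronecker_mul]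
  have hQ11 : (Yᴴ ⊗ₖ E₁) * (Y ⊗ₖ E₁) = (Yᴴ * Y) ⊗ₖ E₁ := by
    rw [← Matrix.mul_kronecker_mul, hE11]
  have hQ22 : (Y ⊗ₖ E₂) * (Yᴴ ⊗ₖ E₂) = (Y * Yᴴ) ⊗ₖ Matrix.fromBlocks 0 0 0 1 := by
    rw [← Matrix.mul_kronecker_mul, hE22]
  have hZ1 : (Yᴴ ⊗ₖ E₁) * (Yᴴ ⊗ₖ E₂) = 0 := by
    rw [← Matrix.mul_kronecker_mul, hE12, kronecker_zero]
  have hZ2 : (Y ⊗ₖ E₂) * (Y ⊗ₖ E₁) = 0 := by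
    rw [← Matrix.mul_kronecker_mul, hE21, kronecker_zero]
  rw [hSS, hS1, hS2, h1S, h2S, hQ11, hQ22, hZ1, hZ2]
  rw [bigK_eq, crossF]
  simp only [hX, hY, hE1, hE2]
  abel

end Identity

section NormBounds

variable {n' : ℕ} {S : Type*} [Fintype S] [DecidableEq S]

lemma colv_add (ψ φ : EuclideanSpace ℂ (Fin n' × S)) (t : S) :
    colv (ψ + φ) t = colv ψ t + colv φ t := rfl

lemma colv_kron_one (N : Matrix (Fin n') (Fin n') ℂ) (ψ : EuclideanSpace ℂ (Fin n' × S)) (t : S) :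
    colv (Matrix.toEuclideanLin (N ⊗ₖ (1 : Matrix S S ℂ)) ψ) t
      = Matrix.toEuclideanLin N (colv ψ t) := by
  ext x
  show Matrix.toEuclideanLin (N ⊗ₖ (1 : Matrix S S ℂ)) ψ (x, t) = _
  rw [← Matrix.diagonal_one, toEuclideanLin_kron_diag_apply]
  simp

lemma norm_kron_one_le (N : Matrix (Fin n') (Fin n') ℂ) (ψ : EuclideanSpace ℂ (Fin n' × S)) :
    ‖Matrix.toEuclideanLin (N ⊗ₖ (1 : Matrix S S ℂ)) ψ‖ ≤ opNorm N * ‖ψ‖ := by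
  have hsq : ‖Matrix.toEuclideanLin (N ⊗ₖ (1 : Matrix S S ℂ)) ψ‖ ^ 2
      ≤ (opNorm N * ‖ψ‖) ^ 2 := by
    rw [norm_colv_decomp]
    have h1 : ∀ t, ‖colv (Matrix.toEuclideanLin (N ⊗ₖ (1 : Matrix S S ℂ)) ψ) t‖ ^ 2
        ≤ (opNorm N) ^ 2 * ‖colv ψ t‖ ^ 2 := by
      intro t
      rw [colv_kron_one]
      rw [← mul_pow]
      refine pow_le_pow_left₀ (norm_nonneg _) ?_ 2
      exact norm_toEuclideanLin_le N (colv ψ t)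
    refine (Finset.sum_le_sum fun t _ => h1 t).trans ?_
    rw [← Finset.mul_sum, ← norm_colv_decomp, mul_pow]
  have h2 : (0 : ℝ) ≤ opNorm N * ‖ψ‖ := mul_nonneg (norm_nonneg _) (norm_nonneg _)
  nlinarith [norm_nonneg (Matrix.toEuclideanLin (N ⊗ₖ (1 : Matrix S S ℂ)) ψ)]

lemma abs_qf_kron_unitary_le (N : Matrix (Fin n') (Fin n') ℂ)
    (G : Matrix S S ℂ) (hG : Gᴴ * G = 1)
    (ψ : EuclideanSpace ℂ (Fin n' × S)) (hψ : ‖ψ‖ = 1) :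
    |qf (N ⊗ₖ G) ψ| ≤ opNorm N := by
  have h1 : |qf (N ⊗ₖ G) ψ| ≤ ‖Matrix.toEuclideanLin (N ⊗ₖ G) ψ‖ := by
    rw [qf]
    refine (Complex.abs_re_le_norm _).trans ?_
    have h := @norm_inner_le_norm ℂ _ _ _ _ ψ (Matrix.toEuclideanLin (N ⊗ₖ G) ψ)
    rwa [hψ, one_mul] at h
  have h2 : ‖Matrix.toEuclideanLin (N ⊗ₖ G) ψ‖ ^ 2
      = ‖Matrix.toEuclideanLin (N ⊗ₖ (1 : Matrix S S ℂ)) ψ‖ ^ 2 := by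
    rw [norm_toEuclideanLin_sq, norm_toEuclideanLin_sq, kron_conjT, kron_conjT,
      Matrix.conjTranspose_one, ← Matrix.mul_kronecker_mul, ← Matrix.mul_kronecker_mul,
      hG, one_mul]
  have h3 : ‖Matrix.toEuclideanLin (N ⊗ₖ G) ψ‖
      = ‖Matrix.toEuclideanLin (N ⊗ₖ (1 : Matrix S S ℂ)) ψ‖ := by
    nlinarith [norm_nonneg (Matrix.toEuclideanLin (N ⊗ₖ G) ψ),
      norm_nonneg (Matrix.toEuclideanLin (N ⊗ₖ (1 : Matrix S S ℂ)) ψ)]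
  refine h1.trans ?_
  rw [h3]
  have := norm_kron_one_le N ψ
  rw [hψ, mul_one] at this
  exact this

end NormBounds

set_option maxHeartbeats 2000000 in
theorem stmt16 {n d : ℕ} (m : ℕ) (hm : m = 2 ^ (d / 2))
    (A : Fin d → Matrix (Fin n) (Fin n) ℂ) (hA : ∀ i, (A i).IsHermitian)
    (B : Matrix (Fin n) (Fin n) ℂ)
    (Γ : Fin d → Matrix (Fin m ⊕ Fin m) (Fin m ⊕ Fin m) ℂ)
    (hΓH : ∀ i, (Γ i).IsHermitian)
    (hΓsq : ∀ i, Γ i * Γ i = 1)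
    (hΓanti : ∀ i j, i ≠ j → Γ i * Γ j = -(Γ j * Γ i))
    (lam : Fin d → ℝ) (ν : ℂ)
    (hQ : (quadQ A B lam ν).IsHermitian) :
    |sigMin (localizer A Γ B lam ν) - Real.sqrt (⨅ i, hQ.eigenvalues i)| ≤
      Real.sqrt ((∑ p ∈ Finset.univ.filter (fun p : Fin d × Fin d => p.1 < p.2),
          opNorm (A p.1 * A p.2 - A p.2 * A p.1)) + opNorm (crossF A Γ B lam ν)) := by
  classical
  set L := localizer A Γ B lam ν with hL
  set ε : ℝ := (∑ p ∈ Finset.univ.filter (fun p : Fin d × Fin d => p.1 < p.2),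
      opNorm (A p.1 * A p.2 - A p.2 * A p.1)) + opNorm (crossF A Γ B lam ν) with hε
  set μ : ℝ := ⨅ i, hQ.eigenvalues i with hμdef
  have hεnn : 0 ≤ ε := add_nonneg (Finset.sum_nonneg fun p _ => norm_nonneg _) (norm_nonneg _)
  -- trivial case n = 0
  rcases Nat.eq_zero_or_pos n with hn | hn
  · subst hn
    have h1 : sigMin L = 0 := by
      rw [sigMin]
      rw [show {r : ℝ | ∃ ψ : EuclideanSpace ℂ (Fin 0 × (Fin m ⊕ Fin m)), ‖ψ‖ = 1
          ∧ r = ‖Matrix.toEuclideanLin L ψ‖} = ∅ from ?_]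
      · exact Real.sInf_empty
      · ext r
        simp only [Set.mem_setOf_eq, Set.mem_empty_iff_false, iff_false, not_exists]
        rintro ψ ⟨hψ, -⟩
        have hψ0 : ψ = 0 := PiLp.ext fun x => Fin.elim0 x.1
        rw [hψ0] at hψ
        simp at hψ
    have h2 : μ = 0 := by
      rw [hμdef]
      rw [iInf_of_isEmpty]
      exact Real.sInf_empty
    rw [h1, h2, Real.sqrt_zero, zero_sub, abs_neg, abs_zero]
    exact Real.sqrt_nonneg _
  -- main case
  haveI : NeZero n := ⟨hn.ne'⟩
  have hm0 : 0 < m := by rw [hm]; positivity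
  set z : Fin m := ⟨0, hm0⟩ with hz
  -- eigenvector attaining the minimum
  obtain ⟨b, hbnorm, hbqf⟩ := rayleigh_attained (quadQ A B lam ν) hQ
  -- abbreviations
  set M₀ : Matrix (Fin n) (Fin n) ℂ := ∑ i, (A i - (lam i : ℂ) • 1) ^ 2 with hM0
  set M₁ : Matrix (Fin n) (Fin n) ℂ := (B - ν • 1)ᴴ * (B - ν • 1) with hM1
  set M₂ : Matrix (Fin n) (Fin n) ℂ := (B - ν • 1) * (B - ν • 1)ᴴ with hM2
  have hQQ : quadQ A B lam ν = tripQ M₀ M₁ M₂ (pi1 (m := 1)) := quadQ_eq_tripQ A B lam ν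
  have hπm : ∀ s : Fin m ⊕ Fin m, pi1 (pi1 (m := m) s) = pi1 s := by
    intro s; cases s <;> rfl
  have hπ1 : ∀ s : S1, pi1 (pi1 (m := 1) s) = pi1 (m := 1) s := by
    intro s; cases s <;> rfl
  -- positivity of μ
  have hXH : ∀ i, (A i - (lam i : ℂ) • 1)ᴴ = A i - (lam i : ℂ) • 1 := by
    intro i
    simp [Matrix.conjTranspose_sub, Matrix.conjTranspose_smul, Complex.star_def,
      Complex.conj_ofReal, (hA i).eq]
  have hQpsd : ∀ ψ : EuclideanSpace ℂ (Fin n × S1), 0 ≤ qf (quadQ A B lam ν) ψ := by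
    intro ψ
    rw [quadQ, qf_add, qf_add]
    have h0 : 0 ≤ qf ((∑ i, (A i - (lam i : ℂ) • 1) ^ 2)
        ⊗ₖ (1 : Matrix S1 S1 ℂ)) ψ := by
      rw [sum_kron, qf_sum]
      refine Finset.sum_nonneg fun i _ => ?_
      have heq : ((A i - (lam i : ℂ) • 1) ^ 2) ⊗ₖ (1 : Matrix S1 S1 ℂ)
          = ((A i - (lam i : ℂ) • 1) ⊗ₖ (1 : Matrix S1 S1 ℂ))ᴴ
            * ((A i - (lam i : ℂ) • 1) ⊗ₖ (1 : Matrix S1 S1 ℂ)) := by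
        rw [kron_conjT, hXH i, Matrix.conjTranspose_one, ← Matrix.mul_kronecker_mul,
          one_mul, sq]
      rw [heq]
      exact qf_nonneg_of_sq _ _
    have h1 : 0 ≤ qf (((B - ν • 1)ᴴ * (B - ν • 1))
        ⊗ₖ (Matrix.fromBlocks 1 0 0 0 : Matrix S1 S1 ℂ)) ψ := by
      have heq : ((B - ν • 1)ᴴ * (B - ν • 1))
            ⊗ₖ (Matrix.fromBlocks 1 0 0 0 : Matrix S1 S1 ℂ)
          = ((B - ν • 1) ⊗ₖ (Matrix.fromBlocks 1 0 0 0 : Matrix S1 S1 ℂ))ᴴ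
            * ((B - ν • 1) ⊗ₖ (Matrix.fromBlocks 1 0 0 0 : Matrix S1 S1 ℂ)) := by
        have hDH : (Matrix.fromBlocks 1 0 0 0 : Matrix S1 S1 ℂ)ᴴ = Matrix.fromBlocks 1 0 0 0 := by
          rw [Matrix.fromBlocks_conjTranspose]; simp
        have hDD : (Matrix.fromBlocks 1 0 0 0 : Matrix S1 S1 ℂ) * Matrix.fromBlocks 1 0 0 0
            = Matrix.fromBlocks 1 0 0 0 := by
          rw [Matrix.fromBlocks_multiply]; simp
        rw [kron_conjT, hDH, ← Matrix.mul_kronecker_mul, hDD]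
      rw [heq]
      exact qf_nonneg_of_sq _ _
    have h2 : 0 ≤ qf (((B - ν • 1) * (B - ν • 1)ᴴ)
        ⊗ₖ (Matrix.fromBlocks 0 0 0 1 : Matrix S1 S1 ℂ)) ψ := by
      have heq : ((B - ν • 1) * (B - ν • 1)ᴴ)
            ⊗ₖ (Matrix.fromBlocks 0 0 0 1 : Matrix S1 S1 ℂ)
          = ((B - ν • 1)ᴴ ⊗ₖ (Matrix.fromBlocks 0 0 0 1 : Matrix S1 S1 ℂ))ᴴ
            * ((B - ν • 1)ᴴ ⊗ₖ (Matrix.fromBlocks 0 0 0 1 : Matrix S1 S1 ℂ)) := by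
        have hDH : (Matrix.fromBlocks 0 0 0 1 : Matrix S1 S1 ℂ)ᴴ = Matrix.fromBlocks 0 0 0 1 := by
          rw [Matrix.fromBlocks_conjTranspose]; simp
        have hDD : (Matrix.fromBlocks 0 0 0 1 : Matrix S1 S1 ℂ) * Matrix.fromBlocks 0 0 0 1
            = Matrix.fromBlocks 0 0 0 1 := by
          rw [Matrix.fromBlocks_multiply]; simp
        rw [kron_conjT, hDH, ← Matrix.mul_kronecker_mul, hDD,
          Matrix.conjTranspose_conjTranspose]
      rw [heq]
      exact qf_nonneg_of_sq _ _
    linarith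
  have hμ0 : 0 ≤ μ := by
    rw [hμdef, ← hbqf]; exact hQpsd b
  -- the perturbation bound
  have hqfLL : ∀ ψ : EuclideanSpace ℂ (Fin n × (Fin m ⊕ Fin m)), ‖ψ‖ = 1 →
      |‖Matrix.toEuclideanLin L ψ‖ ^ 2 - qf (bigK A B lam ν m) ψ| ≤ ε := by
    intro ψ hψ
    rw [norm_toEuclideanLin_sq]
    simp only [hL]
    rw [localizer_expand A hA B Γ hΓH hΓsq hΓanti lam ν, qf_add, qf_add]
    have hC : |qf (∑ p ∈ Finset.univ.filter (fun p : Fin d × Fin d => p.1 < p.2),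
        (A p.1 * A p.2 - A p.2 * A p.1) ⊗ₖ (Γ p.1 * Γ p.2)) ψ|
        ≤ ∑ p ∈ Finset.univ.filter (fun p : Fin d × Fin d => p.1 < p.2),
            opNorm (A p.1 * A p.2 - A p.2 * A p.1) := by
      rw [qf_sum]
      refine (Finset.abs_sum_le_sum_abs _ _).trans (Finset.sum_le_sum fun p hp => ?_)
      have hGp : (Γ p.1 * Γ p.2)ᴴ * (Γ p.1 * Γ p.2) = 1 := by
        rw [Matrix.conjTranspose_mul, (hΓH p.1).eq, (hΓH p.2).eq]
        calc Γ p.2 * Γ p.1 * (Γ p.1 * Γ p.2)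
            = Γ p.2 * (Γ p.1 * Γ p.1) * Γ p.2 := by noncomm_ring
          _ = 1 := by rw [hΓsq p.1, mul_one, hΓsq p.2]
      exact abs_qf_kron_unitary_le _ _ hGp ψ hψ
    have hF : |qf (crossF A Γ B lam ν) ψ| ≤ opNorm (crossF A Γ B lam ν) :=
      abs_qf_le _ ψ hψ
    have habs : ∀ a c f : ℝ, |a + c + f - a| ≤ |c| + |f| := by
      intro a c f
      rw [show a + c + f - a = c + f by ring]
      exact abs_add_le _ _
    refine (habs _ _ _).trans ?_
    rw [hε]
    exact add_le_add hC hF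
  -- lower bound for the K-form
  have hKlow : ∀ ψ : EuclideanSpace ℂ (Fin n × (Fin m ⊕ Fin m)),
      μ * ‖ψ‖ ^ 2 ≤ qf (bigK A B lam ν m) ψ := by
    intro ψ
    rw [show bigK A B lam ν m = tripQ M₀ M₁ M₂ (pi1 (m := m)) from rfl]
    rw [qf_trip M₀ M₁ M₂ (pi1 (m := m)) hπm ψ]
    have hterm : ∀ t, μ * ‖colv ψ t‖ ^ 2
        ≤ qf (tripQ M₀ M₁ M₂ (pi1 (m := 1))) (embedv (pi1 t) (colv ψ t)) := by
      intro t
      have h := rayleigh_lower (quadQ A B lam ν) hQ (embedv (pi1 t) (colv ψ t))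
      rw [norm_embedv_sq] at h
      calc μ * ‖colv ψ t‖ ^ 2
          ≤ qf (quadQ A B lam ν) (embedv (pi1 t) (colv ψ t)) := by rw [hμdef]; exact h
        _ = qf (tripQ M₀ M₁ M₂ (pi1 (m := 1))) (embedv (pi1 t) (colv ψ t)) := by rw [hQQ]
    calc μ * ‖ψ‖ ^ 2 = ∑ t, μ * ‖colv ψ t‖ ^ 2 := by
          rw [norm_colv_decomp, Finset.mul_sum]
      _ ≤ _ := Finset.sum_le_sum fun t _ => hterm t
  -- embed eigenvector
  set ψ₀ : EuclideanSpace ℂ (Fin n × (Fin m ⊕ Fin m)) :=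
    embedv (Sum.inl z) (colv b (Sum.inl 0)) + embedv (Sum.inr z) (colv b (Sum.inr 0)) with hψ₀
  have hcol₁ : ∀ k : Fin m, colv ψ₀ (Sum.inl k)
      = if k = z then colv b (Sum.inl 0) else 0 := by
    intro k
    rw [hψ₀, colv_add, colv_embedv, colv_embedv]
    by_cases hk : k = z
    · subst hk; simp
    · simp [hk]
  have hcol₂ : ∀ k : Fin m, colv ψ₀ (Sum.inr k)
      = if k = z then colv b (Sum.inr 0) else 0 := by
    intro k
    rw [hψ₀, colv_add, colv_embedv, colv_embedv]
    by_cases hk : k = z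
    · subst hk; simp
    · simp [hk]
  have hψ₀norm : ‖ψ₀‖ = 1 := by
    have h1 : ‖ψ₀‖ ^ 2 = ‖b‖ ^ 2 := by
      rw [norm_colv_decomp ψ₀, norm_colv_decomp b]
      rw [Fintype.sum_sum_type, Fintype.sum_sum_type]
      rw [Fin.sum_univ_one, Fin.sum_univ_one]
      have t1 : ∀ k : Fin m, ‖colv ψ₀ (Sum.inl k)‖ ^ 2
          = if k = z then ‖colv b (Sum.inl 0)‖ ^ 2 else 0 := by
        intro k; rw [hcol₁]; by_cases hk : k = z
        · subst hk; simp
        · simp [hk]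
      have t2 : ∀ k : Fin m, ‖colv ψ₀ (Sum.inr k)‖ ^ 2
          = if k = z then ‖colv b (Sum.inr 0)‖ ^ 2 else 0 := by
        intro k; rw [hcol₂]; by_cases hk : k = z
        · subst hk; simp
        · simp [hk]
      simp only [t1, t2, Finset.sum_ite_eq', Finset.mem_univ, if_true]
    rw [hbnorm] at h1
    nlinarith [norm_nonneg ψ₀]
  have hpi1l : pi1 (m := m) (Sum.inl z) = Sum.inl 0 := rfl
  have hpi1r : pi1 (m := m) (Sum.inr z) = Sum.inr 0 := rfl
  have hqfK₀ : qf (bigK A B lam ν m) ψ₀ = μ := by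
    rw [show bigK A B lam ν m = tripQ M₀ M₁ M₂ (pi1 (m := m)) from rfl]
    rw [qf_trip M₀ M₁ M₂ (pi1 (m := m)) hπm ψ₀]
    have hb2 : qf (tripQ M₀ M₁ M₂ (pi1 (m := 1))) b = μ := by
      rw [← hQQ, hbqf, hμdef]
    rw [← hb2, qf_trip M₀ M₁ M₂ (pi1 (m := 1)) hπ1 b]
    rw [Fintype.sum_sum_type, Fintype.sum_sum_type]
    rw [Fin.sum_univ_one, Fin.sum_univ_one]
    have t1 : ∀ k : Fin m, qf (tripQ M₀ M₁ M₂ (pi1 (m := 1)))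
          (embedv (pi1 (Sum.inl k)) (colv ψ₀ (Sum.inl k)))
        = if k = z then qf (tripQ M₀ M₁ M₂ (pi1 (m := 1)))
            (embedv (Sum.inl 0) (colv b (Sum.inl 0))) else 0 := by
      intro k; rw [hcol₁]; by_cases hk : k = z
      · subst hk; simp [pi1]
      · simp only [hk, if_false]
        rw [show pi1 (m := m) (Sum.inl k) = Sum.inl 0 from rfl, embedv_zero, qf_zero]
    have t2 : ∀ k : Fin m, qf (tripQ M₀ M₁ M₂ (pi1 (m := 1)))
          (embedv (pi1 (Sum.inr k)) (colv ψ₀ (Sum.inr k)))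
        = if k = z then qf (tripQ M₀ M₁ M₂ (pi1 (m := 1)))
            (embedv (Sum.inr 0) (colv b (Sum.inr 0))) else 0 := by
      intro k; rw [hcol₂]; by_cases hk : k = z
      · subst hk; simp [pi1]
      · simp only [hk, if_false]
        rw [show pi1 (m := m) (Sum.inr k) = Sum.inr 0 from rfl, embedv_zero, qf_zero]
    simp only [t1, t2, Finset.sum_ite_eq', Finset.mem_univ, if_true]
    congr 2 <;> simp [pi1]
  -- sigMin set facts
  set T := {r : ℝ | ∃ ψ : EuclideanSpace ℂ (Fin n × (Fin m ⊕ Fin m)), ‖ψ‖ = 1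
      ∧ r = ‖Matrix.toEuclideanLin L ψ‖} with hT
  have hsig : sigMin L = sInf T := rfl
  have hbdd : BddBelow T := by
    refine ⟨0, fun r hr => ?_⟩
    obtain ⟨ψ, -, hr⟩ := hr
    rw [hr]; exact norm_nonneg _
  have hTne : T.Nonempty := ⟨‖Matrix.toEuclideanLin L ψ₀‖, ψ₀, hψ₀norm, rfl⟩
  have hσnn : 0 ≤ sigMin L := by
    rw [hsig]
    refine Real.sInf_nonneg fun r hr => ?_
    obtain ⟨ψ, -, hr⟩ := hr
    rw [hr]; exact norm_nonneg _
  -- upper bound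
  have hup : sigMin L ≤ Real.sqrt μ + Real.sqrt ε := by
    have h1 : sigMin L ≤ ‖Matrix.toEuclideanLin L ψ₀‖ :=
      csInf_le hbdd ⟨ψ₀, hψ₀norm, rfl⟩
    have h2 := hqfLL ψ₀ hψ₀norm
    rw [hqfK₀] at h2
    have h3 : ‖Matrix.toEuclideanLin L ψ₀‖ ^ 2 ≤ μ + ε := by
      have := abs_le.mp h2
      linarith [this.2]
    have h4 : ‖Matrix.toEuclideanLin L ψ₀‖ ≤ Real.sqrt μ + Real.sqrt ε := by
      nlinarith [Real.sq_sqrt hμ0, Real.sq_sqrt hεnn, Real.sqrt_nonneg μ, Real.sqrt_nonneg ε,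
        norm_nonneg (Matrix.toEuclideanLin L ψ₀),
        Real.sqrt_nonneg (μ + ε)]
    exact h1.trans h4
  -- lower bound
  have hlow : Real.sqrt μ - Real.sqrt ε ≤ sigMin L := by
    by_cases hcase : Real.sqrt μ ≤ Real.sqrt ε
    · linarith
    · push_neg at hcase
      rw [hsig]
      refine le_csInf hTne fun r hr => ?_
      obtain ⟨ψ, hψ, hrval⟩ := hr
      have h2 := hqfLL ψ hψ
      have h3 := hKlow ψ
      rw [hψ] at h3
      have h4 : μ - ε ≤ ‖Matrix.toEuclideanLin L ψ‖ ^ 2 := by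
        have := abs_le.mp h2
        have h5 : μ * 1 ≤ qf (bigK A B lam ν m) ψ := by simpa using h3
        linarith [this.1]
      rw [hrval]
      nlinarith [Real.sq_sqrt hμ0, Real.sq_sqrt hεnn, Real.sqrt_nonneg μ, Real.sqrt_nonneg ε,
        norm_nonneg (Matrix.toEuclideanLin L ψ)]
  rw [abs_le]
  constructor <;> [linarith; linarith]
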